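/- arXiv:1712.09622 — 3 statements merged into one kernel-verified Lean document; each statement's English description precedes it below -/
import Mathlib

section
/- Under the same hypotheses as the averaging lemma, moreover f(x) + g(b₂·x) = 0 for all x. -/
theorem Equiv.Perm.sum_add_comp_eq {α M : Type*} [Fintype α] [AddCommMonoid M]
    (σ τ : Equiv.Perm α) (f g : α → M) :
    ∑ x, (f x + g (σ x)) = ∑ x, (f x + g (τ x)) := by
  simp only [Finset.sum_add_distrib, Equiv.sum_comp]

theorem Equiv.Perm.add_comp_eq_zero_of_nonneg_of_nonpos {α M : Type*} [Fintype α]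
    [AddCommMonoid M] [PartialOrder M] [AddLeftMono M] (σ τ : Equiv.Perm α) {f g : α → M}
    (hσ : ∀ x, 0 ≤ f x + g (σ x)) (hτ : ∀ x, f x + g (τ x) ≤ 0) (x : α) :
    f x + g (τ x) = 0 := by
  have hsum : ∑ x, (f x + g (τ x)) = 0 :=
    le_antisymm (Fintype.sum_nonpos hτ)
      ((σ.sum_add_comp_eq τ f g) ▸ Fintype.sum_nonneg hσ)
  exact congrFun ((Fintype.sum_eq_zero_iff_of_nonpos hτ).mp hsum) x

theorem stmt_3 (m : ℕ) (hm : 0 < m) (f g : ZMod m → ℚ) (b₁ b₂ : (ZMod m)ˣ)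
    (h₁ : ∀ x : ZMod m, 0 ≤ f x + g ((b₁ : ZMod m) * x))
    (h₂ : ∀ x : ZMod m, f x + g ((b₂ : ZMod m) * x) ≤ 0) :
    ∀ x : ZMod m, f x + g ((b₂ : ZMod m) * x) = 0 := by
  have : NeZero m := ⟨hm.ne'⟩
  exact (Units.mulLeft b₁).add_comp_eq_zero_of_nonneg_of_nonpos (Units.mulLeft b₂) h₁ h₂
end

section
/- Let m be a squarefree positive integer and let G be a subgroup of (ZMod m) × (ZMod m) of order m such that x₁·x₂ + y₁·y₂ = 0 in ZMod m for all (x₁, y₁), (x₂, y₂) ∈ G. If G contains an element of the form (1, b), then b² + 1 = 0 in ZMod m and G is the cyclic subgroup generated by (1, b). -/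
/-! Over a reduced ring, an isotropic vector `(0, y)` for the form `x₁x₂ + y₁y₂` has `y² = 0`,
hence `y = 0`. So every `u ∈ G` agrees with `u.1 • (1, b)`, their difference lying in `G` with
first coordinate `0`; and `b² + 1 = 0` is the isotropy of `(1, b)` itself. -/

namespace Submodule

variable {R : Type*} [CommRing R] [IsReduced R]

theorem eq_zero_of_isotropic_of_fst_eq_zero {u : R × R} (hiso : u.1 * u.1 + u.2 * u.2 = 0)
    (h₁ : u.1 = 0) : u = 0 := by
  rw [h₁, zero_mul, zero_add] at hiso
  exact Prod.ext h₁ (IsReduced.eq_zero _ ⟨2, by rw [pow_two, hiso]⟩)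

theorem eq_span_singleton_of_isotropic {G : Submodule R (R × R)}
    (hiso : ∀ u ∈ G, u.1 * u.1 + u.2 * u.2 = 0) {b : R} (hb : (1, b) ∈ G) :
    G = span R {((1 : R), b)} := by
  refine le_antisymm (fun u hu => ?_) (span_le.mpr (Set.singleton_subset_iff.mpr hb))
  have hw : u - u.1 • (1, b) ∈ G := G.sub_mem hu (G.smul_mem _ hb)
  have hu_eq : u = u.1 • (1, b) :=
    sub_eq_zero.mp (eq_zero_of_isotropic_of_fst_eq_zero (hiso _ hw) (by simp))
  rw [hu_eq]
  exact smul_mem _ _ (mem_span_singleton_self _)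

end Submodule

theorem stmt_10_general (m : ℕ) (hsf : Squarefree m)
    (G : Submodule (ZMod m) ((ZMod m) × (ZMod m)))
    (hform : ∀ u ∈ G, ∀ v ∈ G, u.1 * v.1 + u.2 * v.2 = 0)
    (b : ZMod m) (hb : (1, b) ∈ G) :
    b ^ 2 + 1 = 0 ∧ G = Submodule.span (ZMod m) {((1 : ZMod m), b)} := by
  have : IsReduced (ZMod m) := isReduced_zmod.mpr (Or.inl hsf)
  have hiso : ∀ u ∈ G, u.1 * u.1 + u.2 * u.2 = 0 := fun u hu => hform u hu u hu
  have hb_iso : 1 * 1 + b * b = 0 := hiso _ hb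
  exact ⟨by linear_combination hb_iso, Submodule.eq_span_singleton_of_isotropic hiso hb⟩

theorem stmt_10 (m : ℕ) (hm : 0 < m) (hsf : Squarefree m)
    (G : Submodule (ZMod m) ((ZMod m) × (ZMod m))) (hcard : Nat.card G = m)
    (hform : ∀ u ∈ G, ∀ v ∈ G, u.1 * v.1 + u.2 * v.2 = 0)
    (b : ZMod m) (hb : (1, b) ∈ G) :
    b ^ 2 + 1 = 0 ∧ G = Submodule.span (ZMod m) {((1 : ZMod m), b)} :=
  stmt_10_general m hsf G hform b hb
end

section
/- Let m be a squarefree positive integer and let G be a subgroup of (ZMod m) × (ZMod m) of order m on which the form ((x₁,y₁),(x₂,y₂)) ↦ x₁x₂ + y₁y₂ vanishes identically. Then there exists b ∈ ZMod m with b² + 1 = 0 such that G = {(x, b·x) : x ∈ ZMod m}. -/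
/-!
As `m` is squarefree, `ZMod m` is reduced, so a vector `(0, y)` with `y * y = 0` vanishes: the
first projection is injective on the isotropic subgroup `G`, hence bijective as `|G| = m`. The
element `(1, b)` of `G` over `1` then generates `G`, and its isotropy says `1 + b ^ 2 = 0`.
-/

theorem AddSubgroup.injective_fst_comp_subtype_of_isotropic {R : Type*} [CommRing R] [IsReduced R]
    {G : AddSubgroup (R × R)} (hG : ∀ u ∈ G, u.1 * u.1 + u.2 * u.2 = 0) :
    Function.Injective ((AddMonoidHom.fst R R).comp G.subtype) := by
  rw [injective_iff_map_eq_zero]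
  rintro ⟨u, hu⟩ (h1 : u.1 = 0)
  have h2 : u.2 ^ 2 = 0 := by simpa [h1, sq] using hG u hu
  ext
  exacts [h1, IsReduced.eq_zero _ ⟨2, h2⟩]

theorem ZMod.addSubgroup_eq_zmultiples_of_injective_fst {m : ℕ} {G : AddSubgroup (ZMod m × ZMod m)}
    (hinj : Function.Injective ((AddMonoidHom.fst _ _).comp G.subtype)) {b : ZMod m}
    (hb : (1, b) ∈ G) : G = AddSubgroup.zmultiples (1, b) := by
  refine le_antisymm (fun u hu ↦ ⟨(u.1.cast : ℤ), ?_⟩) (AddSubgroup.zmultiples_le.mpr hb)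
  have hk : (u.1.cast : ℤ) • ((1 : ZMod m), b) ∈ G := G.zsmul_mem hb _
  exact congrArg Subtype.val (@hinj ⟨_, hk⟩ ⟨u, hu⟩ (by simp [ZMod.intCast_cast]))

theorem stmt_11_general (m : ℕ) (hsf : Squarefree m)
    (G : AddSubgroup ((ZMod m) × (ZMod m))) (hcard : Nat.card G = m)
    (hform : ∀ u ∈ G, ∀ v ∈ G, u.1 * v.1 + u.2 * v.2 = 0) :
    ∃ b : ZMod m, b ^ 2 + 1 = 0 ∧ G = AddSubgroup.closure {((1 : ZMod m), b)} := by
  have : NeZero m := ⟨hsf.ne_zero⟩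
  have : IsReduced (ZMod m) := isReduced_zmod.mpr (Or.inl hsf)
  have hinj := AddSubgroup.injective_fst_comp_subtype_of_isotropic fun u hu ↦ hform u hu u hu
  have hbij : Function.Bijective ((AddMonoidHom.fst _ _).comp G.subtype) :=
    (Nat.bijective_iff_injective_and_card _).mpr ⟨hinj, by simp [hcard]⟩
  obtain ⟨⟨g, hg⟩, hg1 : g.1 = 1⟩ := hbij.2 1
  have hg_eq : ((1 : ZMod m), g.2) = g := Prod.ext hg1.symm rfl
  refine ⟨g.2, ?_, ?_⟩
  · linear_combination (by simpa [hg1] using hform g hg g hg : 1 * 1 + g.2 * g.2 = 0)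
  · rw [← AddSubgroup.zmultiples_eq_closure]
    exact ZMod.addSubgroup_eq_zmultiples_of_injective_fst hinj (hg_eq ▸ hg)

theorem stmt_11 (m : ℕ) (hm : 0 < m) (hodd : Odd m) (hsf : Squarefree m)
    (G : AddSubgroup ((ZMod m) × (ZMod m))) (hcard : Nat.card G = m)
    (hform : ∀ u ∈ G, ∀ v ∈ G, u.1 * v.1 + u.2 * v.2 = 0) :
    ∃ b : ZMod m, b ^ 2 + 1 = 0 ∧ G = AddSubgroup.closure {((1 : ZMod m), b)} :=
  stmt_11_general m hsf G hcard hform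
end
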